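/- arXiv:2412.12082 — 10 statements merged into one kernel-verified Lean document; each statement's English description precedes it below -/
import Mathlib

section
/- Let S be a birestriction semigroup. Define s ≍ t (s and t are bicompatible) iff s t^* = t s^* and t^+ s = s^+ t. Then s ≍ t implies s σ t for all s, t ∈ S; and S is proper if and only if σ coincides with ≍, i.e., for all s, t ∈ S, s σ t implies s ≍ t. -/
/-- A birestriction semigroup: a semigroup with unary operations `bstar` (`^*`) and
`bplus` (`^+`) satisfying the defining identities. -/
class BirSgp (S : Type*) extends Semigroup S where
  bstar : S → S
  bplus : S → S
  mul_bstar : ∀ x : S, x * bstar x = x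
  bstar_comm : ∀ x y : S, bstar x * bstar y = bstar y * bstar x
  bstar_mul_bstar : ∀ x y : S, bstar (x * bstar y) = bstar x * bstar y
  bstar_mul : ∀ x y : S, bstar x * y = y * bstar (x * y)
  bplus_mul : ∀ x : S, bplus x * x = x
  bplus_comm : ∀ x y : S, bplus x * bplus y = bplus y * bplus x
  bplus_mul_bplus : ∀ x y : S, bplus (bplus x * y) = bplus x * bplus y
  mul_bplus : ∀ x y : S, x * bplus y = bplus (x * y) * x
  bstar_bplus : ∀ x : S, bstar (bplus x) = bplus x
  bplus_bstar : ∀ x : S, bplus (bstar x) = bstar x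

/-- A birestriction monoid: a birestriction semigroup with an identity element. -/
class BirMon (S : Type*) extends Monoid S, BirSgp S

open BirSgp

/-- The set of projections `P(S) = {s^* : s ∈ S}`. -/
def proj (S : Type*) [BirSgp S] : Set S := Set.range (bstar : S → S)

/-- The natural partial order: `s ≤ t` iff `s = e * t` for some projection `e`. -/
def nle {S : Type*} [BirSgp S] (s t : S) : Prop := ∃ e ∈ proj S, s = e * t

/-- The relation σ: `s σ t` iff `e * s = e * t` for some projection `e`. -/
def sig {S : Type*} [BirSgp S] (s t : S) : Prop := ∃ e ∈ proj S, e * s = e * t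

/-- A birestriction semigroup is proper. -/
def IsProper (S : Type*) [BirSgp S] : Prop :=
  (∀ s t : S, bstar s = bstar t → sig s t → s = t) ∧
  (∀ s t : S, bplus s = bplus t → sig s t → s = t)

/-- bicompatibility implies σ, and properness is equivalent to σ = ≍. -/
theorem statement4 {S : Type*} [BirSgp S] :
    (∀ s t : S, (s * bstar t = t * bstar s ∧ bplus t * s = bplus s * t) → sig s t) ∧
    (IsProper S ↔
      ∀ s t : S, sig s t → (s * bstar t = t * bstar s ∧ bplus t * s = bplus s * t)) := by
  have bplusP : ∀ x : S, bplus x ∈ proj S := fun x => ⟨bplus x, bstar_bplus x⟩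
  have projPlus : ∀ e ∈ proj S, bplus e = e := by
    rintro e ⟨x, rfl⟩; exact bplus_bstar x
  constructor
  · rintro s t ⟨h1, h2⟩
    refine ⟨bplus s * bplus t, ⟨bplus (bplus s * t), by
      rw [← bplus_mul_bplus s t, bstar_bplus]⟩, ?_⟩
    have l : bplus s * bplus t * s = bplus s * t := by
      rw [bplus_comm, mul_assoc, bplus_mul, h2]
    have r : bplus s * bplus t * t = bplus s * t := by
      rw [mul_assoc, bplus_mul]
    rw [l, r]
  · constructor
    · rintro ⟨hstar, hplus⟩ s t ⟨e, heP, he⟩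
      constructor
      · apply hstar
        · rw [bstar_mul_bstar, bstar_mul_bstar, bstar_comm]
        · refine ⟨e, heP, ?_⟩
          have l : e * (s * bstar t) = e * t := by
            rw [← mul_assoc, he, mul_assoc, mul_bstar]
          have r : e * (t * bstar s) = e * s := by
            rw [← mul_assoc, ← he, mul_assoc, mul_bstar]
          rw [l, r, he]
      · apply hplus
        · rw [bplus_mul_bplus, bplus_mul_bplus, bplus_comm]
        · refine ⟨e, heP, ?_⟩
          have hp : e * bplus s = e * bplus t := by
            have h1 : bplus (e * s) = bplus (e * t) := by rw [he]
            have h2 : ∀ x : S, bplus (e * x) = e * bplus x := by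
              intro x
              conv_lhs => rw [← projPlus e heP]
              rw [bplus_mul_bplus, projPlus e heP]
            rwa [h2 s, h2 t] at h1
          have l : e * (bplus t * s) = e * t := by
            rw [← mul_assoc, ← hp, mul_assoc, bplus_mul, he]
          have r : e * (bplus s * t) = e * t := by
            rw [← mul_assoc, hp, mul_assoc, bplus_mul]
          rw [l, r]
    · intro h
      constructor
      · intro s t hst hσ
        have h1 := (h s t hσ).1
        calc s = s * bstar s := (mul_bstar s).symm
          _ = s * bstar t := by rw [hst]
          _ = t * bstar s := h1
          _ = t * bstar t := by rw [hst]
          _ = t := mul_bstar t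
      · intro s t hst hσ
        have h2 := (h s t hσ).2
        calc s = bplus s * s := (bplus_mul s).symm
          _ = bplus t * s := by rw [hst]
          _ = bplus s * t := h2
          _ = bplus t * t := by rw [hst]
          _ = t := bplus_mul t
end

section
/- Let F be an F-birestriction monoid and let ρ be an equivalence relation on F compatible with multiplication and with the operations ^* and ^+, such that ρ is contained in σ (a ρ b implies a σ b). Then for all a, b, x ∈ F: if x ρ x^* and (x a) ρ (x b), then a σ b (equivalently, b ≤ mx(a)). Consequently, a ρ b implies mx(a) = mx(b), so ρ is also compatible with the operation mx. -/
open BirSgp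

section Helpers

variable {S : Type*} [BirSgp S]

lemma proj_mul_proj {e f : S} (he : e ∈ proj S) (hf : f ∈ proj S) :
    e * f ∈ proj S := by
  obtain ⟨u, rfl⟩ := he
  obtain ⟨v, rfl⟩ := hf
  exact ⟨u * bstar v, bstar_mul_bstar u v⟩

lemma proj_comm {e f : S} (he : e ∈ proj S) (hf : f ∈ proj S) :
    e * f = f * e := by
  obtain ⟨u, rfl⟩ := he
  obtain ⟨v, rfl⟩ := hf
  exact bstar_comm u v

lemma proj_idem {e : S} (he : e ∈ proj S) : e * e = e := by
  obtain ⟨u, rfl⟩ := he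
  have h := bstar_mul_bstar u u
  rw [mul_bstar u] at h
  exact h.symm

lemma sig_symm {s t : S} (h : sig s t) : sig t s := by
  obtain ⟨e, he, heq⟩ := h
  exact ⟨e, he, heq.symm⟩

lemma sig_trans {s t u : S} (h1 : sig s t) (h2 : sig t u) : sig s u := by
  obtain ⟨e, he, he1⟩ := h1
  obtain ⟨f, hf, hf1⟩ := h2
  refine ⟨f * e, proj_mul_proj hf he, ?_⟩
  calc f * e * s = f * (e * s) := mul_assoc _ _ _
    _ = f * (e * t) := by rw [he1]
    _ = f * e * t := (mul_assoc _ _ _).symm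
    _ = e * f * t := proj_comm hf he ▸ rfl
    _ = e * (f * t) := mul_assoc _ _ _
    _ = e * (f * u) := by rw [hf1]
    _ = e * f * u := (mul_assoc _ _ _).symm
    _ = f * e * u := by rw [proj_comm he hf]

lemma nle_antisymm {s t : S} (h1 : nle s t) (h2 : nle t s) : s = t := by
  obtain ⟨e, he, hs⟩ := h1
  obtain ⟨f, hf, ht⟩ := h2
  -- t = f * s = f * (e * t)
  have htt : t = f * e * t := by rw [mul_assoc, ← hs, ht]
  calc s = e * t := hs
    _ = e * (f * e * t) := by rw [← htt]
    _ = (e * f * e) * t := by simp only [mul_assoc]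
    _ = (e * e * f) * t := by rw [mul_assoc e f e, proj_comm hf he, ← mul_assoc]
    _ = (e * f) * t := by rw [proj_idem he]
    _ = f * e * t := by rw [proj_comm he hf]
    _ = t := htt.symm

end Helpers

/-- a congruence contained in σ on an F-birestriction monoid is compatible
with the operation `mx`. -/
theorem statement5 {F : Type*} [BirMon F] (mx : F → F)
    (hmx : ∀ a : F, sig a (mx a) ∧ ∀ b : F, sig a b → nle b (mx a))
    (ρ : F → F → Prop) (hequiv : Equivalence ρ)
    (hmul : ∀ a b c d : F, ρ a b → ρ c d → ρ (a * c) (b * d))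
    (hstar : ∀ a b : F, ρ a b → ρ (bstar a) (bstar b))
    (hplus : ∀ a b : F, ρ a b → ρ (bplus a) (bplus b))
    (hsub : ∀ a b : F, ρ a b → sig a b) :
    (∀ a b x : F, ρ x (bstar x) → ρ (x * a) (x * b) → sig a b) ∧
    (∀ a b : F, ρ a b → mx a = mx b) := by
  constructor
  · intro a b x hx hab
    have h1 : ρ (bstar x * a) (x * a) :=
      hmul _ _ _ _ (hequiv.symm hx) (hequiv.refl a)
    have h2 : ρ (x * b) (bstar x * b) :=
      hmul _ _ _ _ hx (hequiv.refl b)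
    have h3 : ρ (bstar x * a) (bstar x * b) :=
      hequiv.trans (hequiv.trans h1 hab) h2
    obtain ⟨e, he, heq⟩ := hsub _ _ h3
    refine ⟨e * bstar x, proj_mul_proj he ⟨x, rfl⟩, ?_⟩
    rw [mul_assoc, mul_assoc, heq]
  · intro a b hab
    have hab' : sig a b := hsub _ _ hab
    have h1 : nle (mx b) (mx a) :=
      (hmx a).2 (mx b) (sig_trans hab' (hmx b).1)
    have h2 : nle (mx a) (mx b) :=
      (hmx b).2 (mx a) (sig_trans (sig_symm hab') (hmx a).1)
    exact nle_antisymm h2 h1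
end

section
/- Let G be a group acting partially on a set X by partial bijections, encoded as a function a : G → X → Option X such that: a(1)(x) = some x for all x ∈ X; if a(m)(x) = some y and a(n)(y) = some z then a(n m)(x) = some z; and each a(m) is injective where defined (a(m)(x) = some y and a(m)(x') = some y imply x = x'). Consider the conditions: (PA3) for all m, x, y: if a(m)(x) = some y then a(m⁻¹)(y) = some x; (LSPA) for all m, n, x: if a(m n)(x) = some y and y lies in the range of a(m), then there exists z with a(n)(x) = some z and a(m)(z) ≠ none; (RSPA) for all m, n, x: if a(m n)(x) ≠ none and a(n)(x) = some z, then a(m)(z) ≠ none. Then (PA3) holds if and only if (LSPA) holds, and (LSPA) holds if and only if (RSPA) holds. -/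
/-- for a partial action of a group by partial bijections,
(PA3) ↔ (LSPA) and (LSPA) ↔ (RSPA). -/
theorem statement6 {G X : Type*} [Group G] (a : G → X → Option X)
    (hone : ∀ x : X, a 1 x = some x)
    (hcomp : ∀ (m n : G) (x y z : X), a m x = some y → a n y = some z →
      a (n * m) x = some z)
    (hinj : ∀ (m : G) (x x' y : X), a m x = some y → a m x' = some y → x = x') :
    ((∀ (m : G) (x y : X), a m x = some y → a m⁻¹ y = some x) ↔
      (∀ (m n : G) (x y : X), a (m * n) x = some y → (∃ w : X, a m w = some y) →
        ∃ z : X, a n x = some z ∧ a m z ≠ none)) ∧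
    ((∀ (m n : G) (x y : X), a (m * n) x = some y → (∃ w : X, a m w = some y) →
        ∃ z : X, a n x = some z ∧ a m z ≠ none) ↔
      (∀ (m n : G) (x z : X), a (m * n) x ≠ none → a n x = some z → a m z ≠ none)) := by
  have pa3_lspa : (∀ (m : G) (x y : X), a m x = some y → a m⁻¹ y = some x) →
      (∀ (m n : G) (x y : X), a (m * n) x = some y → (∃ w : X, a m w = some y) →
        ∃ z : X, a n x = some z ∧ a m z ≠ none) := by
    intro pa3 m n x y hxy ⟨w, hw⟩
    have h1 : a m⁻¹ y = some w := pa3 m w y hw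
    have h2 : a (m⁻¹ * (m * n)) x = some w := hcomp (m * n) m⁻¹ x y w hxy h1
    rw [inv_mul_cancel_left] at h2
    exact ⟨w, h2, by simp [hw]⟩
  have lspa_pa3 : (∀ (m n : G) (x y : X), a (m * n) x = some y →
        (∃ w : X, a m w = some y) → ∃ z : X, a n x = some z ∧ a m z ≠ none) →
      (∀ (m : G) (x y : X), a m x = some y → a m⁻¹ y = some x) := by
    intro lspa m x y hxy
    have h1 : a (m * m⁻¹) y = some y := by rw [mul_inv_cancel]; exact hone y
    obtain ⟨z, hz, -⟩ := lspa m m⁻¹ y y h1 ⟨x, hxy⟩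
    have h2 : a (m⁻¹ * m) x = some z := hcomp m m⁻¹ x y z hxy hz
    rw [inv_mul_cancel, hone x] at h2
    rw [Option.some_inj.mp h2]
    exact hz
  have pa3_rspa : (∀ (m : G) (x y : X), a m x = some y → a m⁻¹ y = some x) →
      (∀ (m n : G) (x z : X), a (m * n) x ≠ none → a n x = some z → a m z ≠ none) := by
    intro pa3 m n x z hmn hz
    obtain ⟨y, hy⟩ := Option.ne_none_iff_exists'.mp hmn
    have h1 : a n⁻¹ z = some x := pa3 n x z hz
    have h2 : a (m * n * n⁻¹) z = some y := hcomp n⁻¹ (m * n) z x y h1 hy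
    rw [mul_inv_cancel_right] at h2
    simp [h2]
  have rspa_pa3 : (∀ (m n : G) (x z : X), a (m * n) x ≠ none → a n x = some z →
        a m z ≠ none) →
      (∀ (m : G) (x y : X), a m x = some y → a m⁻¹ y = some x) := by
    intro rspa m x y hxy
    have h0 : a (m⁻¹ * m) x ≠ none := by rw [inv_mul_cancel, hone x]; simp
    have h1 : a m⁻¹ y ≠ none := rspa m⁻¹ m x y h0 hxy
    obtain ⟨z, hz⟩ := Option.ne_none_iff_exists'.mp h1
    have h2 : a (m⁻¹ * m) x = some z := hcomp m m⁻¹ x y z hxy hz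
    rw [inv_mul_cancel, hone x] at h2
    rw [Option.some_inj.mp h2]
    exact hz
  refine ⟨⟨pa3_lspa, lspa_pa3⟩, ⟨fun h => pa3_rspa (lspa_pa3 h),
    fun h => pa3_lspa (rspa_pa3 h)⟩⟩
end

section
/- Let X be a set, F a birestriction monoid, and ι : X → F a map, with D defined on words over X ∪ X⁻¹ as in the context. Then for all words u, v over X ∪ X⁻¹: D(u v v⁻¹) = D(u) D(v⁻¹). -/
open BirSgp

/-- The formal inverse of a word over `X ∪ X⁻¹`: reverse the word and flip all signs. -/
def winv {X : Type*} (w : List (X × Bool)) : List (X × Bool) :=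
  (w.map (fun p => (p.1, !p.2))).reverse

/-- The map `D` from words over `X ∪ X⁻¹` to a birestriction monoid `F`:
`D(1) = 1`, `D(w·x) = (D(w) ι(x))^*`, `D(w·x⁻¹) = (ι(x) D(w))^+`. -/
def Dmap {X F : Type*} [BirMon F] (ι : X → F) (w : List (X × Bool)) : F :=
  w.foldl (fun d p => if p.2 then bstar (d * ι p.1) else bplus (ι p.1 * d)) 1

section Aux

variable {F : Type*} [BirMon F]

lemma bstar_one' : bstar (1 : F) = 1 := by
  have := mul_bstar (1 : F); simpa using this

lemma bplus_one' : bplus (1 : F) = 1 := by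
  have := bplus_mul (1 : F); simpa using this

/-- An element is a projection if it is fixed by both `bstar` and `bplus`. -/
def IsProjEl (d : F) : Prop := bstar d = d ∧ bplus d = d

lemma isProjEl_one : IsProjEl (1 : F) := ⟨bstar_one', bplus_one'⟩

lemma isProjEl_bstar (x : F) : IsProjEl (bstar x) := by
  constructor
  · have h := bstar_mul_bstar (1 : F) x
    simpa [bstar_one'] using h
  · exact bplus_bstar x

lemma isProjEl_bplus (x : F) : IsProjEl (bplus x) := by
  constructor
  · exact bstar_bplus x
  · have h := bplus_bstar (bplus x)
    rwa [bstar_bplus] at h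

lemma projEl_comm {p q : F} (hp : IsProjEl p) (hq : IsProjEl q) : p * q = q * p := by
  rw [← hp.1, ← hq.1, bstar_comm]

lemma keyT (d e a : F) (hd : IsProjEl d) :
    bplus (a * (bstar (d * a) * e)) = d * bplus (a * e) := by
  have h1 : a * bstar (d * a) = d * a := by
    have h := bstar_mul d a
    rw [hd.1] at h; exact h.symm
  calc bplus (a * (bstar (d * a) * e)) = bplus (d * a * e) := by
        rw [← mul_assoc, h1]
    _ = bplus (bplus d * (a * e)) := by rw [hd.2, mul_assoc]
    _ = bplus d * bplus (a * e) := bplus_mul_bplus _ _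
    _ = d * bplus (a * e) := by rw [hd.2]

lemma keyF (d e a : F) (hd : IsProjEl d) (he : IsProjEl e) :
    bstar (bplus (a * d) * e * a) = d * bstar (e * a) := by
  have h1 : bplus (a * d) * e = e * bplus (a * d) :=
    projEl_comm (isProjEl_bplus _) he
  have h2 : bplus (a * d) * a = a * d := by
    have h := mul_bplus a d
    rw [hd.2] at h; exact h.symm
  calc bstar (bplus (a * d) * e * a) = bstar (e * (bplus (a * d) * a)) := by
        rw [h1, mul_assoc]
    _ = bstar (e * a * bstar d) := by rw [h2, hd.1, mul_assoc]
    _ = bstar (e * a) * bstar d := bstar_mul_bstar _ _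
    _ = bstar d * bstar (e * a) := bstar_comm _ _
    _ = d * bstar (e * a) := by rw [hd.1]

variable {X : Type*}

lemma isProjEl_fold (ι : X → F) (w : List (X × Bool)) {d : F} (hd : IsProjEl d) :
    IsProjEl (w.foldl (fun d p => if p.2 then bstar (d * ι p.1) else bplus (ι p.1 * d)) d) := by
  induction w generalizing d with
  | nil => exact hd
  | cons p w ih =>
    simp only [List.foldl_cons]
    apply ih
    by_cases h : p.2
    · simp only [h, if_pos]; exact isProjEl_bstar _
    · simp only [h, if_neg, Bool.false_eq_true, ite_false]; exact isProjEl_bplus _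

lemma key_fold (ι : X → F) (v : List (X × Bool)) :
    ∀ d : F, IsProjEl d →
      List.foldl (fun d p => if p.2 then bstar (d * ι p.1) else bplus (ι p.1 * d)) d
          (v ++ winv v)
        = d * List.foldl (fun d p => if p.2 then bstar (d * ι p.1) else bplus (ι p.1 * d)) 1
            (winv v) := by
  induction v with
  | nil => intro d hd; simp [winv]
  | cons p v ih =>
    intro d hd
    obtain ⟨x, b⟩ := p
    have hw : winv ((x, b) :: v) = winv v ++ [(x, !b)] := by simp [winv]
    set step : F → (X × Bool) → F :=
      fun d p => if p.2 then bstar (d * ι p.1) else bplus (ι p.1 * d) with hstep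
    have hd' : IsProjEl (step d (x, b)) := by
      by_cases h : b
      · simp only [hstep, h, if_pos]; exact isProjEl_bstar _
      · simp only [hstep, h, Bool.false_eq_true, ite_false]; exact isProjEl_bplus _
    have he : IsProjEl (List.foldl step 1 (winv v)) := isProjEl_fold ι _ isProjEl_one
    rw [hw]
    have hL : ((x, b) :: v) ++ (winv v ++ [(x, !b)])
        = (((x, b) :: v) ++ winv v) ++ [(x, !b)] := by simp
    have : List.foldl step d ((x, b) :: v ++ winv v)
        = step d (x, b) * List.foldl step 1 (winv v) := by
      rw [List.cons_append, List.foldl_cons]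
      exact ih (step d (x, b)) hd'
    rw [hL, List.foldl_append, this, List.foldl_append]
    set e := List.foldl step 1 (winv v) with hedef
    cases b with
    | true =>
      simp only [hstep, List.foldl_cons, List.foldl_nil, Bool.not_true, Bool.false_eq_true,
        ite_false, ite_true]
      exact keyT d e (ι x) hd
    | false =>
      simp only [hstep, List.foldl_cons, List.foldl_nil, Bool.not_false, Bool.false_eq_true,
        ite_false, ite_true]
      exact keyF d e (ι x) hd he

end Aux

/-- `D(u v v⁻¹) = D(u) D(v⁻¹)`. -/
theorem statement7 {X F : Type*} [BirMon F] (ι : X → F)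
    (u v : List (X × Bool)) :
    Dmap ι (u ++ v ++ winv v) = Dmap ι u * Dmap ι (winv v) := by
  have hu : IsProjEl (Dmap ι u) := isProjEl_fold ι u isProjEl_one
  unfold Dmap
  rw [List.append_assoc, List.foldl_append]
  exact key_fold ι v _ hu
end

section
/- Let X be a set, F a birestriction monoid, and ι : X → F a map, with D defined on words over X ∪ X⁻¹ as in the context. Then for all words s, t, u over X ∪ X⁻¹: D(s u t) = D(s u u⁻¹ u t). -/
open BirSgp

section Aux

variable {F : Type*} [BirMon F]

/-- `e` is a projection (fixed by `bstar`). -/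
def IsProjAux (e : F) : Prop := bstar e = e

lemma bstar_bstar_aux (x : F) : bstar (bstar x) = bstar x := by
  conv_lhs => rw [← bplus_bstar x]
  rw [bstar_bplus, bplus_bstar]

lemma bplus_bplus_aux (x : F) : bplus (bplus x) = bplus x := by
  conv_lhs => rw [← bstar_bplus x]
  rw [bplus_bstar, bstar_bplus]

lemma isProjAux_bstar (x : F) : IsProjAux (bstar x) := bstar_bstar_aux x

lemma isProjAux_bplus (x : F) : IsProjAux (bplus x) := bstar_bplus x

lemma IsProjAux.bplus_eq {e : F} (h : IsProjAux e) : bplus e = e := by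
  rw [← h, bplus_bstar, h]

lemma isProjAux_one : IsProjAux (1 : F) := by
  have := mul_bstar (1 : F)
  rwa [one_mul] at this

lemma IsProjAux.comm {e f : F} (he : IsProjAux e) (hf : IsProjAux f) :
    e * f = f * e := by
  conv_lhs => rw [← he, ← hf]
  rw [bstar_comm, he, hf]

lemma IsProjAux.mul {e f : F} (he : IsProjAux e) (hf : IsProjAux f) :
    IsProjAux (e * f) := by
  unfold IsProjAux
  conv_lhs => rw [← hf]
  rw [bstar_mul_bstar, he, hf]

lemma bstar_absorb (x y : F) : bstar (x * y) * bstar y = bstar (x * y) := by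
  rw [← bstar_mul_bstar, mul_assoc, mul_bstar]

lemma bstar_absorb' (x y : F) : bstar y * bstar (x * y) = bstar (x * y) := by
  rw [bstar_comm]; exact bstar_absorb x y

lemma bplus_absorb (x y : F) : bplus x * bplus (x * y) = bplus (x * y) := by
  rw [← bplus_mul_bplus, ← mul_assoc, bplus_mul]

lemma bplus_absorb' (x y : F) : bplus (x * y) * bplus x = bplus (x * y) := by
  rw [bplus_comm]; exact bplus_absorb x y

lemma proj_mul_left {e : F} (he : IsProjAux e) (x : F) :
    e * x = x * bstar (e * x) := by
  conv_lhs => rw [← he]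
  exact bstar_mul e x

lemma proj_mul_right {e : F} (he : IsProjAux e) (x : F) :
    x * e = bplus (x * e) * x := by
  conv_lhs => rw [← he.bplus_eq]
  exact mul_bplus x e

variable {X : Type*}

/-- The step function used in `Dmap`. -/
def fstep (ι : X → F) : F → X × Bool → F :=
  fun d p => if p.2 then bstar (d * ι p.1) else bplus (ι p.1 * d)

lemma fstep_proj (ι : X → F) (d : F) (p : X × Bool) : IsProjAux (fstep ι d p) := by
  unfold fstep
  by_cases h : p.2 <;> simp [h, isProjAux_bstar, isProjAux_bplus]

lemma winv_nil : winv ([] : List (X × Bool)) = [] := rfl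

lemma winv_cons (a : X × Bool) (w : List (X × Bool)) :
    winv (a :: w) = winv w ++ [(a.1, !a.2)] := by
  simp [winv]

/-- Key lemma: folding over `v` and then `v⁻¹` starting from a projection `c`
yields `g * c` for some projection `g`. -/
lemma K2 (ι : X → F) : ∀ (v : List (X × Bool)) (c : F), IsProjAux c →
    ∃ g : F, IsProjAux g ∧
      List.foldl (fstep ι) (List.foldl (fstep ι) c v) (winv v) = g * c := by
  intro v
  induction v with
  | nil =>
    intro c _
    exact ⟨1, isProjAux_one, by simp [winv]⟩
  | cons b v ih =>
    intro c hc
    obtain ⟨y, ε⟩ := b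
    set Y := ι y with hY
    rw [winv_cons, List.foldl_cons, List.foldl_append, List.foldl_cons, List.foldl_nil]
    set c1 := fstep ι c (y, ε) with hc1
    obtain ⟨g, hg, hK⟩ := ih c1 (fstep_proj ι c (y, ε))
    rw [hK]
    cases ε with
    | true =>
      -- c1 = bstar (c * Y); step with (y, false) : bplus (Y * (g * c1))
      have hc1' : c1 = bstar (c * Y) := by simp [hc1, fstep, hY]
      have key : Y * bstar (c * Y) = c * Y := (proj_mul_left hc Y).symm
      refine ⟨bplus (Y * g) * bplus Y, (isProjAux_bplus _).mul (isProjAux_bplus _), ?_⟩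
      show bplus (Y * (g * c1)) = bplus (Y * g) * bplus Y * c
      have hyg : Y * g = bplus (Y * g) * Y := proj_mul_right hg Y
      calc bplus (Y * (g * c1))
          = bplus ((Y * g) * bstar (c * Y)) := by rw [hc1', mul_assoc]
        _ = bplus ((bplus (Y * g) * Y) * bstar (c * Y)) := by
            conv_lhs => rw [hyg]
        _ = bplus (bplus (Y * g) * (c * Y)) := by rw [mul_assoc, key]
        _ = bplus (Y * g) * bplus (c * Y) := bplus_mul_bplus _ _
        _ = bplus (Y * g) * (c * bplus Y) := by
            conv_lhs =>
              rw [show bplus (c * Y) = c * bplus Y by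
                conv_lhs => rw [← hc.bplus_eq]
                rw [bplus_mul_bplus, hc.bplus_eq]]
        _ = bplus (Y * g) * (bplus Y * c) := by rw [hc.comm (isProjAux_bplus Y)]
        _ = bplus (Y * g) * bplus Y * c := by rw [mul_assoc]
    | false =>
      -- c1 = bplus (Y * c); step with (y, true) : bstar ((g * c1) * Y)
      have hc1' : c1 = bplus (Y * c) := by simp [hc1, fstep, hY]
      have key : bplus (Y * c) * Y = Y * c := (proj_mul_right hc Y).symm
      refine ⟨bstar Y * bstar (g * Y), (isProjAux_bstar _).mul (isProjAux_bstar _), ?_⟩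
      show bstar ((g * c1) * Y) = bstar Y * bstar (g * Y) * c
      have hgy : g * Y = Y * bstar (g * Y) := proj_mul_left hg Y
      calc bstar ((g * c1) * Y)
          = bstar (g * (Y * c)) := by rw [hc1', mul_assoc, key]
        _ = bstar ((g * Y) * c) := by rw [mul_assoc]
        _ = bstar ((Y * bstar (g * Y)) * c) := by conv_lhs => rw [hgy]
        _ = bstar (Y * (c * bstar (g * Y))) := by
            rw [mul_assoc, (isProjAux_bstar (g * Y)).comm hc]
        _ = bstar ((Y * c) * bstar (g * Y)) := by rw [mul_assoc]
        _ = bstar (Y * c) * bstar (g * Y) := bstar_mul_bstar _ _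
        _ = (bstar Y * c) * bstar (g * Y) := by
            conv_lhs =>
              rw [show bstar (Y * c) = bstar Y * c by
                conv_lhs => rw [← hc]
                rw [bstar_mul_bstar, hc]]
        _ = bstar Y * (bstar (g * Y) * c) := by
            rw [mul_assoc, hc.comm (isProjAux_bstar (g * Y))]
        _ = bstar Y * bstar (g * Y) * c := by rw [mul_assoc]

/-- Going backwards and forwards over the last letter fixes `g * fstep ι c a`. -/
lemma back_forth (ι : X → F) (c g : F) (hg : IsProjAux g)
    (a : X × Bool) :
    fstep ι (fstep ι (g * fstep ι c a) (a.1, !a.2)) a = g * fstep ι c a := by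
  obtain ⟨y, ε⟩ := a
  set Y := ι y with hY
  set c1 := fstep ι c (y, ε) with hc1
  have hm : IsProjAux (g * c1) := hg.mul (fstep_proj ι c (y, ε))
  cases ε with
  | true =>
    have hc1' : c1 = bstar (c * Y) := by simp [hc1, fstep, hY]
    show fstep ι (fstep ι (g * c1) (y, false)) (y, true) = g * c1
    show bstar (bplus (Y * (g * c1)) * Y) = g * c1
    have h1 : Y * (g * c1) = bplus (Y * (g * c1)) * Y := proj_mul_right hm Y
    rw [← h1]
    calc bstar (Y * (g * c1))
        = bstar (Y * bstar (g * c1)) := by conv_lhs => rw [← hm]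
      _ = bstar Y * bstar (g * c1) := bstar_mul_bstar _ _
      _ = bstar Y * (g * c1) := by rw [hm]
      _ = g * (bstar Y * c1) := by
          rw [← mul_assoc, (isProjAux_bstar Y).comm hg, mul_assoc]
      _ = g * c1 := by rw [hc1', bstar_absorb']
  | false =>
    have hc1' : c1 = bplus (Y * c) := by simp [hc1, fstep, hY]
    show fstep ι (fstep ι (g * c1) (y, true)) (y, false) = g * c1
    show bplus (Y * bstar ((g * c1) * Y)) = g * c1
    have h1 : (g * c1) * Y = Y * bstar ((g * c1) * Y) := proj_mul_left hm Y
    rw [← h1]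
    calc bplus ((g * c1) * Y)
        = bplus (bplus (g * c1) * Y) := by conv_lhs => rw [← hm.bplus_eq]
      _ = bplus (g * c1) * bplus Y := bplus_mul_bplus _ _
      _ = (g * c1) * bplus Y := by rw [hm.bplus_eq]
      _ = g * (bplus Y * c1) := by
          rw [mul_assoc, (fstep_proj ι c (y, false)).comm (isProjAux_bplus Y)]
      _ = g * c1 := by rw [hc1', bplus_absorb]

/-- Main lemma: folding over `u ++ u⁻¹ ++ u` equals folding over `u`. -/
lemma Kmain (ι : X → F) : ∀ (u : List (X × Bool)) (c : F),
    List.foldl (fstep ι)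
      (List.foldl (fstep ι) (List.foldl (fstep ι) c u) (winv u)) u
      = List.foldl (fstep ι) c u := by
  intro u
  induction u with
  | nil => intro c; simp [winv]
  | cons a v ih =>
    intro c
    rw [winv_cons]
    rw [List.foldl_cons, List.foldl_cons, List.foldl_append, List.foldl_cons,
      List.foldl_nil]
    set c1 := fstep ι c a with hc1
    obtain ⟨g, hg, hK⟩ := K2 ι v c1 (fstep_proj ι c a)
    rw [hK]
    rw [back_forth ι c g hg a]
    have := ih c1
    rw [hK] at this
    exact this

end Aux

/-- `D(s u t) = D(s u u⁻¹ u t)`. -/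
theorem statement9 {X F : Type*} [BirMon F] (ι : X → F)
    (s t u : List (X × Bool)) :
    Dmap ι (s ++ u ++ t) = Dmap ι (s ++ u ++ winv u ++ u ++ t) := by
  show List.foldl (fstep ι) 1 _ = List.foldl (fstep ι) 1 _
  simp only [List.foldl_append]
  rw [Kmain]
end

section
/- Let Y, M and the data D(m), R(m), φ(m), φ⁻(m) be as in the context (a premorphism from M into the inverse monoid of order isomorphisms between order ideals of Y). Then the set Y ⋊ M = {(e, m) ∈ Y × M : e ∈ R(m)} is closed under the operations (e, m)(f, n) = (φ(m)(φ⁻(m)(e) ∧ f), m n), (e, m)^+ = (e, 1), and (e, m)^* = (φ⁻(m)(e), 1), and with these operations Y ⋊ M is a proper birestriction semigroup. Its projections are exactly the pairs (e, 1) with e ∈ Y, and the map (e, 1) ↦ e is a semilattice isomorphism from P(Y ⋊ M) onto Y. Moreover, (e, m) σ (f, n) in Y ⋊ M if and only if m = n. -/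
/-- The birestriction-semigroup axioms for given operations `mul`, `star`, `plus`. -/
def IsBirestriction {W : Type*} (mul : W → W → W) (star plus : W → W) : Prop :=
  (∀ a b c : W, mul (mul a b) c = mul a (mul b c)) ∧
  (∀ a : W, mul a (star a) = a) ∧
  (∀ a b : W, mul (star a) (star b) = mul (star b) (star a)) ∧
  (∀ a b : W, star (mul a (star b)) = mul (star a) (star b)) ∧
  (∀ a b : W, mul (star a) b = mul b (star (mul a b))) ∧
  (∀ a : W, mul (plus a) a = a) ∧
  (∀ a b : W, mul (plus a) (plus b) = mul (plus b) (plus a)) ∧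
  (∀ a b : W, plus (mul (plus a) b) = mul (plus a) (plus b)) ∧
  (∀ a b : W, mul a (plus b) = mul (plus (mul a b)) a) ∧
  (∀ a : W, star (plus a) = plus a) ∧
  (∀ a : W, plus (star a) = star a)

/-- The relation σ: `s σ t` iff `e s = e t` for some projection `e` (an element of the
range of `star`). -/
def SigRel {W : Type*} (mul : W → W → W) (star : W → W) (s t : W) : Prop :=
  ∃ e ∈ Set.range star, mul e s = mul e t

/-- Properness for given operations. -/
def IsProperB {W : Type*} (mul : W → W → W) (star plus : W → W) : Prop :=
  (∀ s t : W, star s = star t → SigRel mul star s t → s = t) ∧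
  (∀ s t : W, plus s = plus t → SigRel mul star s t → s = t)

/-- the partial action product `Y ⋊ M` determined by a premorphism from
a monoid `M` to the inverse monoid of order isomorphisms between order ideals of a
semilattice `Y` is a proper birestriction semigroup, with projections `(e,1)`, `e ∈ Y`,
the map `(e,1) ↦ e` being a semilattice isomorphism onto `Y`, and with
`(e,m) σ (f,n)` iff `m = n`. -/
theorem statement10 {Y M : Type*} [SemilatticeInf Y] [Monoid M]
    (Dm Rm : M → Set Y) (φ φi : M → Y → Y)
    (hDideal : ∀ m : M, (Dm m).Nonempty ∧ ∀ x y : Y, x ≤ y → y ∈ Dm m → x ∈ Dm m)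
    (hRideal : ∀ m : M, (Rm m).Nonempty ∧ ∀ x y : Y, x ≤ y → y ∈ Rm m → x ∈ Rm m)
    (hmaps : ∀ m : M, ∀ x ∈ Dm m, φ m x ∈ Rm m)
    (hmaps' : ∀ m : M, ∀ z ∈ Rm m, φi m z ∈ Dm m)
    (hli : ∀ m : M, ∀ x ∈ Dm m, φi m (φ m x) = x)
    (hri : ∀ m : M, ∀ z ∈ Rm m, φ m (φi m z) = z)
    (hord : ∀ m : M, ∀ x ∈ Dm m, ∀ y ∈ Dm m, (x ≤ y ↔ φ m x ≤ φ m y))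
    (hD1 : Dm 1 = Set.univ) (hR1 : Rm 1 = Set.univ)
    (hφ1 : ∀ x : Y, φ 1 x = x)
    (hpre : ∀ m n : M, ∀ y ∈ Dm n, φ n y ∈ Dm m →
      y ∈ Dm (m * n) ∧ φ m (φ n y) = φ (m * n) y) :
    -- closure of the carrier set under the three operations:
    (∀ (e f : Y) (m n : M), e ∈ Rm m → f ∈ Rm n → φ m (φi m e ⊓ f) ∈ Rm (m * n)) ∧
    (∀ (e : Y) (m : M), e ∈ Rm m → e ∈ Rm 1) ∧
    (∀ (e : Y) (m : M), e ∈ Rm m → φi m e ∈ Rm 1) ∧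
    -- the induced operations make `Y ⋊ M` a proper birestriction semigroup:
    ∃ (mul : {p : Y × M // p.1 ∈ Rm p.2} → {p : Y × M // p.1 ∈ Rm p.2} →
        {p : Y × M // p.1 ∈ Rm p.2})
      (st pl : {p : Y × M // p.1 ∈ Rm p.2} → {p : Y × M // p.1 ∈ Rm p.2}),
      (∀ a b : {p : Y × M // p.1 ∈ Rm p.2},
        (mul a b).val = (φ a.val.2 (φi a.val.2 a.val.1 ⊓ b.val.1), a.val.2 * b.val.2)) ∧
      (∀ a : {p : Y × M // p.1 ∈ Rm p.2}, (pl a).val = (a.val.1, 1)) ∧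
      (∀ a : {p : Y × M // p.1 ∈ Rm p.2}, (st a).val = (φi a.val.2 a.val.1, 1)) ∧
      IsBirestriction mul st pl ∧
      IsProperB mul st pl ∧
      -- the projections are exactly the pairs `(e, 1)` with `e ∈ Y`:
      Set.range st = {a : {p : Y × M // p.1 ∈ Rm p.2} | a.val.2 = 1} ∧
      (∀ e : Y, ∃ a : {p : Y × M // p.1 ∈ Rm p.2}, a.val = (e, 1)) ∧
      -- `(e,1) ↦ e` is a semilattice isomorphism from `P(Y ⋊ M)` onto `Y`:
      (∀ a b : {p : Y × M // p.1 ∈ Rm p.2}, a.val.2 = 1 → b.val.2 = 1 →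
        (mul a b).val.1 = a.val.1 ⊓ b.val.1) ∧
      (∀ a b : {p : Y × M // p.1 ∈ Rm p.2}, a.val.2 = 1 → b.val.2 = 1 →
        a.val.1 = b.val.1 → a = b) ∧
      -- `(e,m) σ (f,n)` iff `m = n`:
      (∀ a b : {p : Y × M // p.1 ∈ Rm p.2},
        SigRel mul st a b ↔ a.val.2 = b.val.2) := by

  have h1Y : ∀ x : Y, x ∈ Rm 1 := fun x => by rw [hR1]; trivial
  have h1D : ∀ x : Y, x ∈ Dm 1 := fun x => by rw [hD1]; trivial
  have hφi1 : ∀ x : Y, φi 1 x = x := fun x => by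
    have h := hli 1 x (h1D x); rwa [hφ1 x] at h
  have hRdc : ∀ m : M, ∀ x y : Y, x ≤ y → y ∈ Rm m → x ∈ Rm m := fun m => (hRideal m).2
  have hDdc : ∀ m : M, ∀ x y : Y, x ≤ y → y ∈ Dm m → x ∈ Dm m := fun m => (hDideal m).2
  have hmono : ∀ m : M, ∀ x ∈ Dm m, ∀ y ∈ Dm m, x ≤ y → φ m x ≤ φ m y :=
    fun m x hx y hy h => (hord m x hx y hy).mp h
  have himono : ∀ m : M, ∀ x ∈ Rm m, ∀ y ∈ Rm m, x ≤ y → φi m x ≤ φi m y := by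
    intro m x hx y hy h
    refine (hord m _ (hmaps' m x hx) _ (hmaps' m y hy)).mpr ?_
    rw [hri m x hx, hri m y hy]; exact h
  have hkey : ∀ (m n : M) (e f : Y), e ∈ Rm m → f ∈ Rm n →
      (φi m e ⊓ f ∈ Dm m) ∧ (φi m e ⊓ f ∈ Rm n) ∧
      φi n (φi m e ⊓ f) ∈ Dm (m * n) ∧
      φ (m * n) (φi n (φi m e ⊓ f)) = φ m (φi m e ⊓ f) ∧
      φ m (φi m e ⊓ f) ∈ Rm (m * n) ∧
      φi (m * n) (φ m (φi m e ⊓ f)) = φi n (φi m e ⊓ f) := by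
    intro m n e f he hf
    have hu1 : φi m e ⊓ f ∈ Dm m := hDdc m _ _ inf_le_left (hmaps' m e he)
    have hu2 : φi m e ⊓ f ∈ Rm n := hRdc n _ _ inf_le_right hf
    have hv : φi n (φi m e ⊓ f) ∈ Dm n := hmaps' n _ hu2
    have hv2 : φ n (φi n (φi m e ⊓ f)) ∈ Dm m := by rw [hri n _ hu2]; exact hu1
    obtain ⟨hmem, heq⟩ := hpre m n _ hv hv2
    rw [hri n _ hu2] at heq
    refine ⟨hu1, hu2, hmem, heq.symm, ?_, ?_⟩
    · rw [heq]; exact hmaps _ _ hmem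
    · rw [heq]; exact hli _ _ hmem
  have hmeet : ∀ (n : M) (f : Y), f ∈ Rm n → ∀ c g : Y,
      φ n (φi n (c ⊓ f) ⊓ g) = c ⊓ φ n (φi n f ⊓ g) := by
    intro n f hf c g
    have hcf : c ⊓ f ∈ Rm n := hRdc n _ _ inf_le_right hf
    have hi1 : φi n (c ⊓ f) ∈ Dm n := hmaps' n _ hcf
    have hif : φi n f ∈ Dm n := hmaps' n f hf
    have hL : φi n (c ⊓ f) ⊓ g ∈ Dm n := hDdc n _ _ inf_le_left hi1
    have hRd : φi n f ⊓ g ∈ Dm n := hDdc n _ _ inf_le_left hif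
    apply le_antisymm
    · refine le_inf ?_ ?_
      · calc φ n (φi n (c ⊓ f) ⊓ g) ≤ φ n (φi n (c ⊓ f)) :=
              hmono n _ hL _ hi1 inf_le_left
          _ = c ⊓ f := hri n _ hcf
          _ ≤ c := inf_le_left
      · exact hmono n _ hL _ hRd
          (inf_le_inf_right g (himono n _ hcf _ hf inf_le_right))
    · have hfg : φ n (φi n f ⊓ g) ≤ f := by
        calc φ n (φi n f ⊓ g) ≤ φ n (φi n f) := hmono n _ hRd _ hif inf_le_left
          _ = f := hri n f hf
      have htf : c ⊓ φ n (φi n f ⊓ g) ≤ f := le_trans inf_le_right hfg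
      have htR : c ⊓ φ n (φi n f ⊓ g) ∈ Rm n := hRdc n _ _ htf hf
      have h2 : φi n (c ⊓ φ n (φi n f ⊓ g)) ≤ φi n (c ⊓ f) :=
        himono n _ htR _ hcf (le_inf inf_le_left htf)
      have h3 : φi n (c ⊓ φ n (φi n f ⊓ g)) ≤ g := by
        have h4 : φi n (c ⊓ φ n (φi n f ⊓ g)) ≤ φi n (φ n (φi n f ⊓ g)) :=
          himono n _ htR _ (hmaps n _ hRd) inf_le_right
        rw [hli n _ hRd] at h4
        exact le_trans h4 inf_le_right
      calc c ⊓ φ n (φi n f ⊓ g) = φ n (φi n (c ⊓ φ n (φi n f ⊓ g))) := (hri n _ htR).symm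
        _ ≤ φ n (φi n (c ⊓ f) ⊓ g) := hmono n _ (hmaps' n _ htR) _ hL (le_inf h2 h3)
  refine ⟨fun e f m n he hf => (hkey m n e f he hf).2.2.2.2.1,
    fun e m _ => h1Y e, fun e m _ => h1Y _, ?_⟩
  refine ⟨fun a b => ⟨(φ a.val.2 (φi a.val.2 a.val.1 ⊓ b.val.1), a.val.2 * b.val.2),
      (hkey _ _ _ _ a.prop b.prop).2.2.2.2.1⟩,
    fun a => ⟨(φi a.val.2 a.val.1, 1), h1Y _⟩,
    fun a => ⟨(a.val.1, 1), h1Y _⟩,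
    fun a b => rfl, fun a => rfl, fun a => rfl, ?_, ?_, ?_, ?_, ?_, ?_, ?_⟩
  · -- IsBirestriction
    refine ⟨?_, ?_, ?_, ?_, ?_, ?_, ?_, ?_, ?_, ?_, ?_⟩
    · -- associativity
      rintro ⟨⟨e, m⟩, he⟩ ⟨⟨f, n⟩, hf⟩ ⟨⟨g, p⟩, hg⟩
      apply Subtype.ext
      dsimp only
      obtain ⟨hu1, hu2, hw, heq, hmemR, hinv⟩ := hkey m n e f he hf
      have hy : φi n (φi m e ⊓ f) ⊓ g ∈ Dm n :=
        hDdc n _ _ inf_le_left (hmaps' n _ hu2)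
      have hy2 : φ n (φi n (φi m e ⊓ f) ⊓ g) ∈ Dm m := by
        refine hDdc m _ _ ?_ hu1
        calc φ n (φi n (φi m e ⊓ f) ⊓ g) ≤ φ n (φi n (φi m e ⊓ f)) :=
            hmono n _ hy _ (hmaps' n _ hu2) inf_le_left
          _ = φi m e ⊓ f := hri n _ hu2
      obtain ⟨_, heq2⟩ := hpre m n _ hy hy2
      refine Prod.ext ?_ (mul_assoc m n p)
      dsimp only
      rw [hinv, ← heq2, hmeet n f hf (φi m e) g]
    · -- a * st a = a
      rintro ⟨⟨e, m⟩, he⟩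
      apply Subtype.ext
      dsimp only
      refine Prod.ext ?_ (mul_one m)
      dsimp only
      rw [inf_idem, hri m e he]
    · -- star commutation
      rintro ⟨⟨e, m⟩, he⟩ ⟨⟨f, n⟩, hf⟩
      apply Subtype.ext
      refine Prod.ext ?_ rfl
      dsimp only
      rw [hφi1, hφi1, hφ1, hφ1, inf_comm]
    · -- star (a * st b) = st a * st b
      rintro ⟨⟨e, m⟩, he⟩ ⟨⟨f, n⟩, hf⟩
      apply Subtype.ext
      refine Prod.ext ?_ (one_mul 1).symm
      dsimp only
      have hmem : φi m e ⊓ φi n f ∈ Dm m := hDdc m _ _ inf_le_left (hmaps' m e he)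
      rw [hφi1, hφ1, mul_one, hli m _ hmem]
    · -- st a * b = b * st (a * b)
      rintro ⟨⟨e, m⟩, he⟩ ⟨⟨f, n⟩, hf⟩
      apply Subtype.ext
      obtain ⟨hu1, hu2, hw, heq, hmemR, hinv⟩ := hkey m n e f he hf
      refine Prod.ext ?_ (by dsimp only; rw [one_mul, mul_one])
      dsimp only
      rw [hφi1, hφ1, hinv,
        inf_eq_right.mpr (himono n _ hu2 f hf inf_le_right), hri n _ hu2]
    · -- pl a * a = a
      rintro ⟨⟨e, m⟩, he⟩
      apply Subtype.ext
      refine Prod.ext ?_ (one_mul m)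
      dsimp only
      rw [hφi1, hφ1, inf_idem]
    · -- plus commutation
      rintro ⟨⟨e, m⟩, he⟩ ⟨⟨f, n⟩, hf⟩
      apply Subtype.ext
      refine Prod.ext ?_ rfl
      dsimp only
      rw [hφi1, hφi1, hφ1, hφ1, inf_comm]
    · -- plus (pl a * b) = pl a * pl b
      rintro ⟨⟨e, m⟩, he⟩ ⟨⟨f, n⟩, hf⟩
      apply Subtype.ext
      exact Prod.ext rfl (one_mul 1).symm
    · -- a * pl b = pl (a * b) * a
      rintro ⟨⟨e, m⟩, he⟩ ⟨⟨f, n⟩, hf⟩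
      apply Subtype.ext
      obtain ⟨hu1, hu2, hw, heq, hmemR, hinv⟩ := hkey m n e f he hf
      refine Prod.ext ?_ (by dsimp only; rw [one_mul, mul_one])
      dsimp only
      have hle : φ m (φi m e ⊓ f) ≤ e := by
        calc φ m (φi m e ⊓ f) ≤ φ m (φi m e) :=
            hmono m _ hu1 _ (hmaps' m e he) inf_le_left
          _ = e := hri m e he
      rw [hφi1, hφ1, inf_eq_left.mpr hle]
    · -- st (pl a) = pl a
      rintro ⟨⟨e, m⟩, he⟩
      apply Subtype.ext
      refine Prod.ext ?_ rfl
      dsimp only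
      rw [hφi1]
    · -- pl (st a) = st a
      rintro ⟨⟨e, m⟩, he⟩
      apply Subtype.ext
      exact Prod.ext rfl rfl
  · -- IsProperB
    constructor
    · rintro ⟨⟨e, m⟩, he⟩ ⟨⟨f, n⟩, hf⟩ hst ⟨g, ⟨c, rfl⟩, heq⟩
      have hmn : m = n := by
        have h2 := congrArg (fun x => x.val.2) heq
        simpa using h2
      subst hmn
      have h1 := congrArg (fun x => x.val.1) hst
      dsimp only at h1
      have hef : e = f := by
        have := congrArg (φ m) h1
        rwa [hri m e he, hri m f hf] at this
      exact Subtype.ext (Prod.ext hef rfl)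
    · rintro ⟨⟨e, m⟩, he⟩ ⟨⟨f, n⟩, hf⟩ hpl ⟨g, ⟨c, rfl⟩, heq⟩
      have hmn : m = n := by
        have h2 := congrArg (fun x => x.val.2) heq
        simpa using h2
      subst hmn
      have h1 := congrArg (fun x => x.val.1) hpl
      dsimp only at h1
      exact Subtype.ext (Prod.ext h1 rfl)
  · -- range st
    ext a
    simp only [Set.mem_range, Set.mem_setOf_eq]
    constructor
    · rintro ⟨c, rfl⟩; rfl
    · intro h
      exact ⟨a, Subtype.ext (Prod.ext (by rw [h, hφi1]) h.symm)⟩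
  · -- surjectivity onto (e, 1)
    exact fun e => ⟨⟨(e, 1), h1Y e⟩, rfl⟩
  · -- meet of projections
    rintro ⟨⟨e, m⟩, he⟩ ⟨⟨f, n⟩, hf⟩ h1 h2
    dsimp only at h1 h2 ⊢
    subst h1
    rw [hφi1, hφ1]
  · -- injectivity on projections
    rintro ⟨⟨e, m⟩, he⟩ ⟨⟨f, n⟩, hf⟩ h1 h2 h3
    dsimp only at h1 h2 h3
    exact Subtype.ext (Prod.ext h3 (h1.trans h2.symm))
  · -- sigma iff
    rintro ⟨⟨e, m⟩, he⟩ ⟨⟨f, n⟩, hf⟩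
    constructor
    · rintro ⟨g, ⟨c, rfl⟩, heq⟩
      have h2 := congrArg (fun x => x.val.2) heq
      simpa using h2
    · intro h
      dsimp only at h
      subst h
      refine ⟨⟨(e ⊓ f, 1), h1Y _⟩, ⟨⟨(e ⊓ f, 1), h1Y _⟩, ?_⟩, ?_⟩
      · exact Subtype.ext (Prod.ext (hφi1 _) rfl)
      · apply Subtype.ext
        refine Prod.ext ?_ rfl
        dsimp only
        rw [hφi1, hφ1, hφ1, inf_eq_left.mpr (inf_le_left : e ⊓ f ≤ e),
          inf_eq_left.mpr (inf_le_right : e ⊓ f ≤ f)]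
end

section
/- Let S be a birestriction semigroup and T an E-unitary inverse semigroup, i.e., an inverse semigroup such that whenever e ∈ E(T), t ∈ T, and e = f t for some f ∈ E(T) (so e ≤ t in the natural partial order of T), then t ∈ E(T). If there exists an injective map f : S → T with f(s t) = f(s) f(t), f(s^*) = f(s)⁻¹ f(s), and f(s^+) = f(s) f(s)⁻¹ for all s, t ∈ S, then S is proper. -/
open BirSgp

/-- An inverse semigroup: a semigroup with a unary operation `iinv` satisfying
`t t⁻¹ t = t`, `(t⁻¹)⁻¹ = t`, and commuting idempotents `s s⁻¹ t t⁻¹ = t t⁻¹ s s⁻¹`. -/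
class InvSgp (T : Type*) extends Semigroup T where
  iinv : T → T
  mul_iinv_mul : ∀ t : T, t * iinv t * t = t
  iinv_iinv : ∀ t : T, iinv (iinv t) = t
  idem_comm : ∀ s t : T, s * iinv s * (t * iinv t) = t * iinv t * (s * iinv s)

open InvSgp

/-- The idempotents `E(T) = {t t⁻¹ : t ∈ T}` of an inverse semigroup. -/
def idemSet (T : Type*) [InvSgp T] : Set T := Set.range (fun t : T => t * iinv t)

section InvLemmas

variable {T : Type*} [InvSgp T]

lemma iinv_mul_self_iinv (t : T) : iinv t * t * iinv t = iinv t := by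
  have h := mul_iinv_mul (iinv t)
  rwa [iinv_iinv] at h

lemma idem_of_mem {e : T} (h : e ∈ idemSet T) : e * e = e := by
  obtain ⟨t, ht⟩ := h
  have ht' : t * iinv t = e := ht
  rw [← ht']
  calc t * iinv t * (t * iinv t) = t * (iinv t * t * iinv t) := by simp [mul_assoc]
  _ = t * iinv t := by rw [iinv_mul_self_iinv]

lemma mul_iinv_idem (t : T) : (t * iinv t) * (t * iinv t) = t * iinv t :=
  idem_of_mem ⟨t, rfl⟩

lemma iinv_mul_idem (t : T) : (iinv t * t) * (iinv t * t) = iinv t * t := by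
  have h := mul_iinv_idem (iinv t)
  rwa [iinv_iinv] at h

lemma iinv_of_idem {e : T} (h : e * e = e) : iinv e = e := by
  have h1 : e * iinv e * e = e := mul_iinv_mul e
  have hcomm : e * iinv e * (iinv e * e) = iinv e * e * (e * iinv e) := by
    have hc := idem_comm e (iinv e)
    rwa [iinv_iinv] at hc
  have h2 : e * iinv e * (iinv e * e) = iinv e := by
    rw [hcomm]
    calc iinv e * e * (e * iinv e) = iinv e * (e * e) * iinv e := by simp [mul_assoc]
    _ = iinv e * e * iinv e := by rw [h]
    _ = iinv e := iinv_mul_self_iinv e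
  have h3 : e * iinv e = iinv e := by
    calc e * iinv e = e * (e * iinv e * (iinv e * e)) := by rw [h2]
    _ = e * e * iinv e * (iinv e * e) := by simp [mul_assoc]
    _ = e * iinv e * (iinv e * e) := by rw [h]
    _ = iinv e := h2
  have h4 : iinv e * e = iinv e := by
    calc iinv e * e = (e * iinv e * (iinv e * e)) * e := by rw [h2]
    _ = e * iinv e * (iinv e * (e * e)) := by simp [mul_assoc]
    _ = e * iinv e * (iinv e * e) := by rw [h]
    _ = iinv e := h2
  calc iinv e = iinv e * e := h4.symm
  _ = e * iinv e * e := by rw [h3]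
  _ = e := h1

lemma mem_of_idem {e : T} (h : e * e = e) : e ∈ idemSet T :=
  ⟨e, show e * iinv e = e by rw [iinv_of_idem h]; exact h⟩

lemma idem_comm' {p q : T} (hp : p * p = p) (hq : q * q = q) : p * q = q * p := by
  obtain ⟨s, hs⟩ := mem_of_idem hp
  obtain ⟨t, ht⟩ := mem_of_idem hq
  have hs' : s * iinv s = p := hs
  have ht' : t * iinv t = q := ht
  rw [← hs', ← ht']
  exact idem_comm s t

lemma idem_mul {p q : T} (hp : p * p = p) (hq : q * q = q) : (p * q) * (p * q) = p * q := by
  have hc := idem_comm' hp hq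
  calc (p * q) * (p * q) = p * (q * p) * q := by simp [mul_assoc]
  _ = p * (p * q) * q := by rw [← hc]
  _ = (p * p) * (q * q) := by simp [mul_assoc]
  _ = p * q := by rw [hp, hq]

lemma iinv_unique {x u : T} (h1 : x * u * x = x) (h2 : u * x * u = u) : u = iinv x := by
  have hxv : x * iinv x * x = x := mul_iinv_mul x
  have hvx : iinv x * x * iinv x = iinv x := iinv_mul_self_iinv x
  have h1' : u * (x * u) = u := by rw [← mul_assoc]; exact h2
  have iux : (u * x) * (u * x) = u * x := by
    calc (u * x) * (u * x) = (u * x * u) * x := by simp [mul_assoc]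
    _ = u * x := by rw [h2]
  have ixu : (x * u) * (x * u) = x * u := by
    calc (x * u) * (x * u) = (x * u * x) * u := by simp [mul_assoc]
    _ = x * u := by rw [h1]
  have ivx : (iinv x * x) * (iinv x * x) = iinv x * x := iinv_mul_idem x
  have ixv : (x * iinv x) * (x * iinv x) = x * iinv x := mul_iinv_idem x
  have c1 : (u * x) * (iinv x * x) = (iinv x * x) * (u * x) := idem_comm' iux ivx
  have c2 : (x * u) * (x * iinv x) = (x * iinv x) * (x * u) := idem_comm' ixu ixv
  have hu : u = iinv x * x * u := by
    calc u = u * x * u := h2.symm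
    _ = u * (x * iinv x * x) * u := by rw [hxv]
    _ = (u * x) * (iinv x * x) * u := by simp [mul_assoc]
    _ = (iinv x * x) * (u * x) * u := by rw [c1]
    _ = iinv x * x * (u * (x * u)) := by simp [mul_assoc]
    _ = iinv x * x * u := by rw [h1']
  have hv : iinv x = iinv x * x * u := by
    calc iinv x = iinv x * x * iinv x := hvx.symm
    _ = iinv x * (x * u * x) * iinv x := by rw [h1]
    _ = iinv x * ((x * u) * (x * iinv x)) := by simp [mul_assoc]
    _ = iinv x * ((x * iinv x) * (x * u)) := by rw [c2]
    _ = (iinv x * x * iinv x) * (x * u) := by simp [mul_assoc]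
    _ = iinv x * (x * u) := by rw [hvx]
    _ = iinv x * x * u := by rw [mul_assoc]
  rw [hu, ← hv]

lemma iinv_mul (x y : T) : iinv (x * y) = iinv y * iinv x := by
  have hy : (y * iinv y) * (y * iinv y) = y * iinv y := mul_iinv_idem y
  have hx : (iinv x * x) * (iinv x * x) = iinv x * x := iinv_mul_idem x
  have hc : (y * iinv y) * (iinv x * x) = (iinv x * x) * (y * iinv y) := idem_comm' hy hx
  symm
  apply iinv_unique
  · calc (x * y) * (iinv y * iinv x) * (x * y)
        = x * ((y * iinv y) * (iinv x * x)) * y := by simp [mul_assoc]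
    _ = x * ((iinv x * x) * (y * iinv y)) * y := by rw [hc]
    _ = (x * iinv x * x) * (y * iinv y * y) := by simp [mul_assoc]
    _ = x * y := by rw [mul_iinv_mul, mul_iinv_mul]
  · calc (iinv y * iinv x) * (x * y) * (iinv y * iinv x)
        = iinv y * ((iinv x * x) * (y * iinv y)) * iinv x := by simp [mul_assoc]
    _ = iinv y * ((y * iinv y) * (iinv x * x)) * iinv x := by rw [← hc]
    _ = (iinv y * y * iinv y) * (iinv x * x * iinv x) := by simp [mul_assoc]
    _ = iinv y * iinv x := by rw [iinv_mul_self_iinv, iinv_mul_self_iinv]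

lemma keyL (hEU : ∀ e t : T, e ∈ idemSet T → (∃ f ∈ idemSet T, e = f * t) → t ∈ idemSet T) {a b g : T} (hg : g * g = g) (h : g * a = g * b) :
    (a * iinv b) * (a * iinv b) = a * iinv b := by
  apply idem_of_mem
  apply hEU (g * (a * iinv b)) _ _ ⟨g, mem_of_idem hg, rfl⟩
  have he : g * (a * iinv b) = g * (b * iinv b) := by
    rw [← mul_assoc, h, mul_assoc]
  rw [he]
  exact mem_of_idem (idem_mul hg (mul_iinv_idem b))

lemma keyR (hEU : ∀ e t : T, e ∈ idemSet T → (∃ f ∈ idemSet T, e = f * t) → t ∈ idemSet T) {a b g : T} (hg : g * g = g) (h : g * a = g * b) :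
    (iinv a * b) * (iinv a * b) = iinv a * b := by
  have hig : iinv g = g := iinv_of_idem hg
  have h' : iinv a * g = iinv b * g := by
    have hh := congrArg iinv h
    rwa [iinv_mul, iinv_mul, hig] at hh
  have hca := idem_comm' hg (mul_iinv_idem a)
  have hcb := idem_comm' hg (mul_iinv_idem b)
  have hhidem : (iinv a * g * a) * (iinv a * g * a) = iinv a * g * a := by
    calc (iinv a * g * a) * (iinv a * g * a)
        = iinv a * (g * (a * iinv a)) * (g * a) := by simp [mul_assoc]
    _ = iinv a * ((a * iinv a) * g) * (g * a) := by rw [hca]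
    _ = (iinv a * a * iinv a) * (g * g) * a := by simp [mul_assoc]
    _ = iinv a * (g * g) * a := by rw [iinv_mul_self_iinv]
    _ = iinv a * g * a := by rw [hg]
  have he'' : (iinv a * g * a) * (iinv a * b) = iinv b * g * b := by
    calc (iinv a * g * a) * (iinv a * b)
        = iinv a * (g * (a * iinv a)) * b := by simp [mul_assoc]
    _ = iinv a * ((a * iinv a) * g) * b := by rw [hca]
    _ = (iinv a * a * iinv a) * (g * b) := by simp [mul_assoc]
    _ = iinv a * (g * b) := by rw [iinv_mul_self_iinv]
    _ = iinv a * g * b := by rw [mul_assoc]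
    _ = iinv b * g * b := by rw [h']
  apply idem_of_mem
  apply hEU ((iinv a * g * a) * (iinv a * b)) _ _ ⟨iinv a * g * a, mem_of_idem hhidem, rfl⟩
  rw [he'']
  apply mem_of_idem
  calc (iinv b * g * b) * (iinv b * g * b)
      = iinv b * (g * (b * iinv b)) * (g * b) := by simp [mul_assoc]
  _ = iinv b * ((b * iinv b) * g) * (g * b) := by rw [hcb]
  _ = (iinv b * b * iinv b) * (g * g) * b := by simp [mul_assoc]
  _ = iinv b * (g * g) * b := by rw [iinv_mul_self_iinv]
  _ = iinv b * g * b := by rw [hg]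

end InvLemmas

/-- a birestriction semigroup which (2,1,1)-embeds into an E-unitary
inverse semigroup is proper. -/
theorem statement11 {S T : Type*} [BirSgp S] [InvSgp T]
    (hEU : ∀ e t : T, e ∈ idemSet T → (∃ f ∈ idemSet T, e = f * t) → t ∈ idemSet T)
    (f : S → T) (hinj : Function.Injective f)
    (hmul : ∀ s t : S, f (s * t) = f s * f t)
    (hstar : ∀ s : S, f (bstar s) = iinv (f s) * f s)
    (hplus : ∀ s : S, f (bplus s) = f s * iinv (f s)) :
    IsProper S := by
  constructor
  · intro s t hst hsig
    obtain ⟨e, he, heq⟩ := hsig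
    obtain ⟨u, rfl⟩ := he
    have hg : f (bstar u) * f (bstar u) = f (bstar u) := by
      rw [hstar]; exact iinv_mul_idem (f u)
    have hab : f (bstar u) * f s = f (bstar u) * f t := by
      rw [← hmul, ← hmul, heq]
    have hE : (f s * iinv (f t)) * (f s * iinv (f t)) = f s * iinv (f t) :=
      keyL hEU hg hab
    have hE' : f t * iinv (f s) = f s * iinv (f t) := by
      have h1 : iinv (f s * iinv (f t)) = f s * iinv (f t) := iinv_of_idem hE
      rw [← h1, iinv_mul, iinv_iinv]
    have hstarT : iinv (f s) * f s = iinv (f t) * f t := by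
      rw [← hstar, ← hstar, hst]
    have ha : f s = (f s * iinv (f t)) * f t := by
      calc f s = f s * iinv (f s) * f s := (mul_iinv_mul (f s)).symm
      _ = f s * (iinv (f s) * f s) := mul_assoc _ _ _
      _ = f s * (iinv (f t) * f t) := by rw [hstarT]
      _ = (f s * iinv (f t)) * f t := (mul_assoc _ _ _).symm
    have hb : f t = (f s * iinv (f t)) * f s := by
      calc f t = f t * iinv (f t) * f t := (mul_iinv_mul (f t)).symm
      _ = f t * (iinv (f t) * f t) := mul_assoc _ _ _
      _ = f t * (iinv (f s) * f s) := by rw [hstarT]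
      _ = (f t * iinv (f s)) * f s := (mul_assoc _ _ _).symm
      _ = (f s * iinv (f t)) * f s := by rw [hE']
    apply hinj
    calc f s = (f s * iinv (f t)) * f t := ha
    _ = (f s * iinv (f t)) * ((f s * iinv (f t)) * f s) := by rw [← hb]
    _ = ((f s * iinv (f t)) * (f s * iinv (f t))) * f s := (mul_assoc _ _ _).symm
    _ = (f s * iinv (f t)) * f s := by rw [hE]
    _ = f t := hb.symm
  · intro s t hst hsig
    obtain ⟨e, he, heq⟩ := hsig
    obtain ⟨u, rfl⟩ := he
    have hg : f (bstar u) * f (bstar u) = f (bstar u) := by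
      rw [hstar]; exact iinv_mul_idem (f u)
    have hab : f (bstar u) * f s = f (bstar u) * f t := by
      rw [← hmul, ← hmul, heq]
    have hF : (iinv (f s) * f t) * (iinv (f s) * f t) = iinv (f s) * f t :=
      keyR hEU hg hab
    have hF' : iinv (f t) * f s = iinv (f s) * f t := by
      have h1 : iinv (iinv (f s) * f t) = iinv (f s) * f t := iinv_of_idem hF
      rw [← h1, iinv_mul, iinv_iinv]
    have hplusT : f s * iinv (f s) = f t * iinv (f t) := by
      rw [← hplus, ← hplus, hst]
    have ha : f s = f t * (iinv (f s) * f t) := by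
      calc f s = f s * iinv (f s) * f s := (mul_iinv_mul (f s)).symm
      _ = f t * iinv (f t) * f s := by rw [hplusT]
      _ = f t * (iinv (f t) * f s) := mul_assoc _ _ _
      _ = f t * (iinv (f s) * f t) := by rw [hF']
    have hb : f t = f s * (iinv (f s) * f t) := by
      calc f t = f t * iinv (f t) * f t := (mul_iinv_mul (f t)).symm
      _ = f s * iinv (f s) * f t := by rw [hplusT]
      _ = f s * (iinv (f s) * f t) := mul_assoc _ _ _
    apply hinj
    calc f s = f t * (iinv (f s) * f t) := ha
    _ = (f s * (iinv (f s) * f t)) * (iinv (f s) * f t) := by rw [← hb]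
    _ = f s * ((iinv (f s) * f t) * (iinv (f s) * f t)) := mul_assoc _ _ _
    _ = f s * (iinv (f s) * f t) := by rw [hF]
    _ = f t := hb.symm
end

section
/- Let S be a proper birestriction monoid, T an inverse monoid regarded as a birestriction monoid via t^* = t⁻¹ t and t^+ = t t⁻¹, and ψ : S → T a map preserving 1, multiplication, and the operations ^* and ^+, whose restriction to P(S) is injective. Then ψ is injective on σ-classes of S: if a σ b and ψ(a) = ψ(b), then a = b. -/
open BirSgp

/-- An inverse monoid: a monoid with a unary operation `iinv` satisfying
`t t⁻¹ t = t`, `(t⁻¹)⁻¹ = t`, and commuting idempotents. -/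
class InvMon (T : Type*) extends Monoid T where
  iinv : T → T
  mul_iinv_mul : ∀ t : T, t * iinv t * t = t
  iinv_iinv : ∀ t : T, iinv (iinv t) = t
  idem_comm : ∀ s t : T, s * iinv s * (t * iinv t) = t * iinv t * (s * iinv s)

open InvMon

/-- The idempotents `E(T) = {t t⁻¹ : t ∈ T}` of an inverse monoid. -/
def idemSetM (T : Type*) [InvMon T] : Set T := Set.range (fun t : T => t * iinv t)

/-- The relation σ on an inverse monoid, regarded as a birestriction monoid:
`s σ t` iff `e s = e t` for some idempotent `e`. -/
def sigM {T : Type*} [InvMon T] (s t : T) : Prop := ∃ e ∈ idemSetM T, e * s = e * t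

/-- a (2,1,1,0)-morphism from a proper birestriction monoid to an inverse
monoid which is injective on projections is injective on σ-classes. -/
theorem statement12 {S T : Type*} [BirMon S] [InvMon T]
    (hproper : IsProper S)
    (ψ : S → T) (hone : ψ 1 = 1)
    (hmul : ∀ s t : S, ψ (s * t) = ψ s * ψ t)
    (hstar : ∀ s : S, ψ (bstar s) = iinv (ψ s) * ψ s)
    (hplus : ∀ s : S, ψ (bplus s) = ψ s * iinv (ψ s))
    (hinjP : Set.InjOn ψ (proj S)) :
    ∀ a b : S, sig a b → ψ a = ψ b → a = b := by
  intro a b hsig hψ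
  have hstareq : bstar a = bstar b := by
    apply hinjP ⟨a, rfl⟩ ⟨b, rfl⟩
    rw [hstar, hstar, hψ]
  exact hproper.1 a b hstareq hsig
end

section
/- Let S be a birestriction monoid, T an inverse monoid regarded as a birestriction monoid via t^* = t⁻¹ t and t^+ = t t⁻¹, and ψ : S → T a map preserving 1, multiplication, and the operations ^* and ^+ whose restriction to P(S) is a bijection onto E(T). Then: (1) if ψ is injective, then ψ(a) σ ψ(b) in T implies a σ b in S, for all a, b ∈ S; (2) if S is proper and for all a, b ∈ S, ψ(a) σ ψ(b) implies a σ b, then ψ is injective. -/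
open BirSgp

open InvMon

/-- for a (2,1,1,0)-morphism `ψ` from a birestriction monoid to an inverse
monoid restricting to a bijection `P(S) → E(T)`:
(1) if `ψ` is injective then `ψ(a) σ ψ(b)` implies `a σ b`;
(2) if `S` is proper and `ψ(a) σ ψ(b)` implies `a σ b`, then `ψ` is injective. -/
theorem statement13 {S T : Type*} [BirMon S] [InvMon T]
    (ψ : S → T) (hone : ψ 1 = 1)
    (hmul : ∀ s t : S, ψ (s * t) = ψ s * ψ t)
    (hstar : ∀ s : S, ψ (bstar s) = iinv (ψ s) * ψ s)
    (hplus : ∀ s : S, ψ (bplus s) = ψ s * iinv (ψ s))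
    (hinjP : Set.InjOn ψ (proj S))
    (hsurjP : ψ '' proj S = idemSetM T) :
    (Function.Injective ψ → ∀ a b : S, sigM (ψ a) (ψ b) → sig a b) ∧
    (IsProper S → (∀ a b : S, sigM (ψ a) (ψ b) → sig a b) →
      Function.Injective ψ) := by
  constructor
  · intro hinj a b ⟨e, he, hee⟩
    rw [← hsurjP] at he
    obtain ⟨f, hf, rfl⟩ := he
    refine ⟨f, hf, hinj ?_⟩
    rw [hmul, hmul, hee]
  · intro hproper hrefl a b hab
    have h1 : iinv (1 : T) = 1 := by
      have := mul_iinv_mul (1 : T); simpa using this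
    have hstareq : bstar a = bstar b := by
      apply hinjP ⟨a, rfl⟩ ⟨b, rfl⟩
      rw [hstar, hstar, hab]
    have hsig : sig a b := by
      apply hrefl
      exact ⟨1, ⟨1, by simp [h1]⟩, by rw [hab]⟩
    exact hproper.1 a b hstareq hsig
end

section
/- Let X be a set and let u be a word over X ∪ X⁻¹ (a list of pairs (x, b) with x ∈ X and b ∈ Bool) whose image in the free group FG(X) is the identity. Then u is either the empty word or u can be written as a concatenation u = x₁ v₁ x₁⁻¹ · x₂ v₂ x₂⁻¹ ⋯ xₙ vₙ xₙ⁻¹ for some n ≥ 1, where each xᵢ is a single letter from X ∪ X⁻¹ (with xᵢ⁻¹ its formal inverse, i.e., the same generator with flipped sign), and each vᵢ is a word over X ∪ X⁻¹ whose image in FG(X) is the identity. -/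
open FreeGroup in
lemma statement18_aux {X : Type*} :
    ∀ {L : List (X × Bool)}, FreeGroup.Red L [] → ∀ (a : X × Bool) (t : List (X × Bool)),
      L = a :: t → ∃ v w : List (X × Bool),
        t = v ++ (a.1, !a.2) :: w ∧ FreeGroup.Red v [] ∧ FreeGroup.Red w [] := by
  intro L hL
  induction hL using Relation.ReflTransGen.head_induction_on with
  | refl => intro a t h; simp at h
  | head hstep hred ih =>
    intro a t h
    obtain @⟨L₁, L₂, x, b⟩ := hstep
    cases L₁ with
    | nil =>
      simp only [List.nil_append] at h hred
      injection h with h1 h2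
      subst h1; subst h2
      exact ⟨[], L₂, by simp, Relation.ReflTransGen.refl, hred⟩
    | cons a' s =>
      simp only [List.cons_append] at h hred ih
      injection h with h1 h2
      subst h1; subst h2
      obtain ⟨v', w', hsplit, hv', hw'⟩ := ih a' (s ++ L₂) rfl
      rcases List.append_eq_append_iff.1 hsplit with ⟨m, rfl, hm⟩ | ⟨c, rfl, hc⟩
      · refine ⟨s ++ (x, b) :: (x, !b) :: m, w', by simp [hm], ?_, hw'⟩
        exact Relation.ReflTransGen.head FreeGroup.Red.Step.not hv'
      · cases c with
        | nil =>
          simp only [List.nil_append] at hc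
          refine ⟨v' ++ (x, b) :: (x, !b) :: [], w', by simp [← hc], ?_, hw'⟩
          have hstep2 : FreeGroup.Red.Step (v' ++ (x, b) :: (x, !b) :: ([] : List (X × Bool)))
              (v' ++ []) := FreeGroup.Red.Step.not
          exact Relation.ReflTransGen.head hstep2 (by rw [List.append_nil]; exact hv')
        | cons d c' =>
          injection hc with h3 h4
          subst h3; subst h4
          refine ⟨v', c' ++ (x, b) :: (x, !b) :: L₂, by simp, hv', ?_⟩
          exact Relation.ReflTransGen.head FreeGroup.Red.Step.not hw'

lemma statement18_aux2 {X : Type*} :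
    ∀ (n : ℕ) (u : List (X × Bool)), u.length ≤ n → FreeGroup.mk u = 1 →
    u = [] ∨ ∃ L : List ((X × Bool) × List (X × Bool)), L ≠ [] ∧
      u = (L.map (fun p => p.1 :: (p.2 ++ [(p.1.1, !p.1.2)]))).flatten ∧
      ∀ p ∈ L, FreeGroup.mk p.2 = 1 := by
  intro n
  induction n with
  | zero => intro u hu _; left; simpa using List.length_eq_zero_iff.1 (Nat.le_zero.1 hu)
  | succ m ih =>
    intro u hu h
    match u with
    | [] => exact Or.inl rfl
    | a :: t =>
      right
      have hred : FreeGroup.Red (a :: t) [] := by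
        have := FreeGroup.Red.exact.1 (h.trans FreeGroup.one_eq_mk)
        obtain ⟨c, h1, h2⟩ := this
        rwa [FreeGroup.Red.nil_iff.1 h2] at h1
      obtain ⟨v, w, rfl, hv, hw⟩ := statement18_aux hred a t rfl
      have hv1 : FreeGroup.mk v = 1 := by
        rw [FreeGroup.one_eq_mk]
        exact FreeGroup.Red.exact.2 ⟨[], hv, Relation.ReflTransGen.refl⟩
      have hw1 : FreeGroup.mk w = 1 := by
        rw [FreeGroup.one_eq_mk]
        exact FreeGroup.Red.exact.2 ⟨[], hw, Relation.ReflTransGen.refl⟩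
      have hwlen : w.length ≤ m := by
        simp [Nat.succ_le_succ_iff] at hu; omega
      rcases ih w hwlen hw1 with rfl | ⟨L, hL, hflat, hall⟩
      · exact ⟨[(a, v)], by simp, by simp, by simpa using hv1⟩
      · refine ⟨(a, v) :: L, by simp, ?_, ?_⟩
        · simp [hflat]
        · intro p hp
          rcases List.mem_cons.1 hp with rfl | hp
          · simpa using hv1
          · exact hall p hp

/-- a word over `X ∪ X⁻¹` whose image in the free group is trivial is
empty or a concatenation of blocks `xᵢ vᵢ xᵢ⁻¹` where each `vᵢ` has trivial image. -/
theorem statement18 {X : Type*} (u : List (X × Bool))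
    (h : FreeGroup.mk u = 1) :
    u = [] ∨ ∃ L : List ((X × Bool) × List (X × Bool)), L ≠ [] ∧
      u = (L.map (fun p => p.1 :: (p.2 ++ [(p.1.1, !p.1.2)]))).flatten ∧
      ∀ p ∈ L, FreeGroup.mk p.2 = 1 := by
  exact statement18_aux2 u.length u le_rfl h
end
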